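/- Let d ∈ ℕ*, α ∈ (0,2), r > 0, R > 0, and define the truncated kernel κ^c(z) := min( |z|^{−(d+α)}, r^{−(d+α)} ) for z ∈ ℝ^d. Then for every nonnegative u ∈ L^1(ℝ^d) and every x ∈ ℝ^d: (κ^c * u)(x) ≥ C ⟨x⟩^{−(d+α)} ∫_{B_R} u(y) dy, where B_R is the ball of radius R centered at the origin and C := ( √2 · max(r, R, 1) )^{−(d+α)}. -/

import Mathlib

/-!
For `y` in the ball `B_R` we have `|x - y| ≤ |x| + R ≤ M (1 + |x|) ≤ √2 M ⟨x⟩` with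
`M = max(r, R, 1)`, and also `r ≤ √2 M ⟨x⟩`; since `t ↦ t^{-(d+α)}` is antitone, the kernel
`κ^c(x - y)` is at least `(√2 M ⟨x⟩)^{-(d+α)}` on `B_R` minus the point `x`, which is null as
`d > 0` (at `y = x` the integrand is the junk value `0 ^ (-(d+α)) = 0`). Integrating
against `u ≥ 0` over `B_R` and enlarging the domain to `ℝ^d` gives the bound.
-/

open MeasureTheory

/-- Japanese bracket `⟨x⟩ = (1+|x|²)^{1/2}`. -/
noncomputable def jb {d : ℕ} (x : EuclideanSpace ℝ (Fin d)) : ℝ := Real.sqrt (1 + ‖x‖ ^ 2)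

lemma one_le_jb {d : ℕ} (x : EuclideanSpace ℝ (Fin d)) : 1 ≤ jb x :=
  Real.one_le_sqrt.mpr (le_add_of_nonneg_right (sq_nonneg _))

lemma one_add_norm_le_sqrt_two_mul_jb {d : ℕ} (x : EuclideanSpace ℝ (Fin d)) :
    1 + ‖x‖ ≤ √2 * jb x := by
  rw [jb, ← Real.sqrt_mul zero_le_two, Real.le_sqrt (by positivity) (by positivity)]
  nlinarith [sq_nonneg (1 - ‖x‖)]

lemma mul_one_add_norm_le_sqrt_two_mul_jb {d : ℕ} (x : EuclideanSpace ℝ (Fin d)) {M : ℝ}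
    (hM : 0 ≤ M) : M * (1 + ‖x‖) ≤ √2 * M * jb x := by
  rw [mul_comm √2, mul_assoc]
  exact mul_le_mul_of_nonneg_left (one_add_norm_le_sqrt_two_mul_jb x) hM

lemma rpow_neg_le_min_rpow_neg {t r K s : ℝ} (ht : 0 < t) (hr : 0 < r) (hs : 0 ≤ s)
    (htK : t ≤ K) (hrK : r ≤ K) : K ^ (-s) ≤ min (t ^ (-s)) (r ^ (-s)) :=
  le_min (Real.rpow_le_rpow_of_nonpos ht htK (neg_nonpos.mpr hs))
    (Real.rpow_le_rpow_of_nonpos hr hrK (neg_nonpos.mpr hs))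

lemma rpow_neg_le_min_norm_sub_rpow_neg {d : ℕ} {r R s : ℝ} (hr : 0 < r) (hs : 0 ≤ s)
    {x y : EuclideanSpace ℝ (Fin d)} (hy : ‖y‖ ≤ R) (hxy : x ≠ y) :
    (√2 * max r (max R 1) * jb x) ^ (-s) ≤ min (‖x - y‖ ^ (-s)) (r ^ (-s)) := by
  set M := max r (max R 1)
  have hM1 : 1 ≤ M := le_max_of_le_right (le_max_right _ _)
  have hMx := mul_one_add_norm_le_sqrt_two_mul_jb x (zero_le_one.trans hM1)
  refine rpow_neg_le_min_rpow_neg (norm_pos_iff.mpr (sub_ne_zero.mpr hxy)) hr hs ?_ ?_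
  · calc ‖x - y‖ ≤ ‖x‖ + ‖y‖ := norm_sub_le _ _
      _ ≤ ‖x‖ + M := by gcongr; exact hy.trans (le_max_of_le_right (le_max_left _ _))
      _ ≤ M * (1 + ‖x‖) := by nlinarith [norm_nonneg x]
      _ ≤ _ := hMx
  · nlinarith [le_max_left r (max R 1), norm_nonneg x]

lemma MeasureTheory.Integrable.min_norm_sub_rpow_neg_mul {E : Type*} [NormedAddCommGroup E]
    [MeasurableSpace E] [OpensMeasurableSpace E] {μ : Measure E} {u : E → ℝ} (hu : Integrable u μ) (x : E)
    {r : ℝ} (hr : 0 ≤ r) (s : ℝ) :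
    Integrable (fun y => min (‖x - y‖ ^ (-s)) (r ^ (-s)) * u y) μ := by
  have hk : Measurable fun y => min (‖x - y‖ ^ (-s)) (r ^ (-s)) :=
    ((continuous_const.sub continuous_id).norm.measurable.pow_const _).min measurable_const
  refine hu.bdd_mul (c := r ^ (-s)) hk.aestronglyMeasurable (ae_of_all _ fun y => ?_)
  rw [Real.norm_of_nonneg (le_min (by positivity) (by positivity))]
  exact min_le_right _ _

lemma const_mul_setIntegral_le_integral_mul {α : Type*} [MeasurableSpace α] {μ : Measure α}
    {s : Set α} (hs : MeasurableSet s) {f u : α → ℝ} {c : ℝ} (hu : IntegrableOn u s μ)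
    (hfu : Integrable (fun y => f y * u y) μ) (hf0 : ∀ y, 0 ≤ f y) (hu0 : ∀ y, 0 ≤ u y)
    (hcf : ∀ᵐ y ∂μ, y ∈ s → c ≤ f y) :
    c * ∫ y in s, u y ∂μ ≤ ∫ y, f y * u y ∂μ :=
  calc c * ∫ y in s, u y ∂μ = ∫ y in s, c * u y ∂μ := (integral_const_mul c u).symm
    _ ≤ ∫ y in s, f y * u y ∂μ :=
      setIntegral_mono_on_ae (hu.const_mul c) hfu.integrableOn hs
        (hcf.mono fun y hy hys => mul_le_mul_of_nonneg_right (hy hys) (hu0 y))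
    _ ≤ ∫ y, f y * u y ∂μ :=
      setIntegral_le_integral hfu (ae_of_all _ fun y => mul_nonneg (hf0 y) (hu0 y))

theorem stmt18_general (d : ℕ) (hd : 0 < d) (α r R : ℝ) (hα : 0 < α ∧ α < 2)
    (hr : 0 < r)
    (u : EuclideanSpace ℝ (Fin d) → ℝ) (hu : Integrable u) (hu0 : ∀ y, 0 ≤ u y) :
    ∀ x : EuclideanSpace ℝ (Fin d),
      (Real.sqrt 2 * max r (max R 1)) ^ (-((d : ℝ) + α)) * jb x ^ (-((d : ℝ) + α)) *
          (∫ y in Metric.ball (0 : EuclideanSpace ℝ (Fin d)) R, u y) ≤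
        ∫ y : EuclideanSpace ℝ (Fin d),
          min (‖x - y‖ ^ (-((d : ℝ) + α))) (r ^ (-((d : ℝ) + α))) * u y := by
  intro x
  have : Nonempty (Fin d) := Fin.pos_iff_nonempty.mp hd
  have hs : 0 ≤ (d : ℝ) + α := add_nonneg d.cast_nonneg hα.1.le
  have hx : ∀ᵐ y : EuclideanSpace ℝ (Fin d), y ≠ x :=
    measure_eq_zero_iff_ae_notMem.mp (measure_singleton x)
  rw [← Real.mul_rpow (by positivity) (zero_le_one.trans (one_le_jb x))]
  refine const_mul_setIntegral_le_integral_mul measurableSet_ball hu.integrableOn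
    (hu.min_norm_sub_rpow_neg_mul x hr.le _) (fun y => le_min (by positivity) (by positivity)) hu0 ?_
  filter_upwards [hx] with y hyx hy
  exact rpow_neg_le_min_norm_sub_rpow_neg hr hs (mem_ball_zero_iff.mp hy).le (Ne.symm hyx)

theorem stmt18 (d : ℕ) (hd : 0 < d) (α r R : ℝ) (hα : 0 < α ∧ α < 2)
    (hr : 0 < r) (hR : 0 < R)
    (u : EuclideanSpace ℝ (Fin d) → ℝ) (hu : Integrable u) (hu0 : ∀ y, 0 ≤ u y) :
    ∀ x : EuclideanSpace ℝ (Fin d),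
      (Real.sqrt 2 * max r (max R 1)) ^ (-((d : ℝ) + α)) * jb x ^ (-((d : ℝ) + α)) *
          (∫ y in Metric.ball (0 : EuclideanSpace ℝ (Fin d)) R, u y) ≤
        ∫ y : EuclideanSpace ℝ (Fin d),
          min (‖x - y‖ ^ (-((d : ℝ) + α))) (r ^ (-((d : ℝ) + α))) * u y :=
  stmt18_general d hd α r R hα hr u hu hu0
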